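/- Let X, Y be locally convex Hausdorff topological vector spaces, F : X ⇒ Y a polyhedral convex multifunction, and D ⊆ Y a generalized polyhedral convex set. Then the inverse image F⁻¹(D) = {x ∈ X : F(x) ∩ D ≠ ∅} is a polyhedral convex set in X. -/

import Mathlib

/-- A set is polyhedral convex if it is a finite intersection of half-spaces
given by continuous linear functionals. -/
def IsPolyhedralConvex {E : Type*} [AddCommGroup E] [Module ℝ E] [TopologicalSpace E]
    (D : Set E) : Prop :=
  ∃ (n : ℕ) (f : Fin n → E →L[ℝ] ℝ) (α : Fin n → ℝ),
    D = {x | ∀ i, f i x ≤ α i}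

/-- A set is generalized polyhedral convex if it is the intersection of a closed
affine subspace with finitely many half-spaces given by continuous linear functionals. -/
def IsGPC {E : Type*} [AddCommGroup E] [Module ℝ E] [TopologicalSpace E]
    (D : Set E) : Prop :=
  ∃ (n : ℕ) (f : Fin n → E →L[ℝ] ℝ) (α : Fin n → ℝ) (L : AffineSubspace ℝ E),
    IsClosed (L : Set E) ∧ D = {x | x ∈ L ∧ ∀ i, f i x ≤ α i}

/-!
The constraints defining `G` see `y` only through finitely many functionals, i.e. through a
continuous linear map `B : Y → ℝⁿ`; write them as `A x + B y ≤ α`. After merging the inequalities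
of `D` into `G`, the preimage is therefore the projection to `X` of
`{(x, u) ∈ X × ℝⁿ | A x + u ≤ α, u ∈ B(L)}`, where `L` is the affine part of `D`. Now `B(L)` is an
affine subspace of `ℝⁿ`, cut out by finitely many linear equations, and projecting away finitely
many real coordinates preserves polyhedrality by Fourier–Motzkin elimination.
-/

theorem exists_forall_le_forall_le {α κ ι : Type*} [ConditionallyCompleteLattice α] [Nonempty α]
    [Finite κ] [Finite ι] {a : κ → α} {b : ι → α} (h : ∀ j i, a j ≤ b i) :
    ∃ t, (∀ j, a j ≤ t) ∧ ∀ i, t ≤ b i := by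
  cases isEmpty_or_nonempty κ
  · obtain ⟨t, ht⟩ := (Set.finite_range b).bddBelow
    exact ⟨t, isEmptyElim, fun i => ht ⟨i, rfl⟩⟩
  · exact ⟨⨆ j, a j, le_ciSup (Set.finite_range a).bddAbove, fun i => ciSup_le (h · i)⟩

theorem exists_forall_mul_le_iff {ι : Type*} [Finite ι] {c s : ι → ℝ} :
    (∃ t, ∀ i, c i * t ≤ s i) ↔
      (∀ i, c i = 0 → 0 ≤ s i) ∧ ∀ i j, 0 < c i → c j < 0 → c j * s i ≤ c i * s j := by
  constructor
  · rintro ⟨t, ht⟩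
    refine ⟨fun i hi => by simpa [hi] using ht i, fun i j hi hj => ?_⟩
    nlinarith [mul_le_mul_of_nonpos_left (ht i) hj.le, mul_le_mul_of_nonneg_left (ht j) hi.le]
  · rintro ⟨hzero, hpair⟩
    obtain ⟨t, hlo, hup⟩ := exists_forall_le_forall_le
      (a := fun j : {j // c j < 0} => s j / c j) (b := fun i : {i // 0 < c i} => s i / c i)
      fun j i => by
        rw [le_div_iff₀ i.2, div_mul_eq_mul_div, div_le_iff_of_neg j.2]
        linarith [hpair i j i.2 j.2]
    refine ⟨t, fun i => ?_⟩
    rcases lt_trichotomy (c i) 0 with hi | hi | hi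
    · linarith [(div_le_iff_of_neg hi).1 (hlo ⟨i, hi⟩)]
    · simpa [hi] using hzero i hi
    · linarith [(le_div_iff₀ hi).1 (hup ⟨i, hi⟩)]

section

variable {E F : Type*} [AddCommGroup E] [Module ℝ E] [TopologicalSpace E]
  [AddCommGroup F] [Module ℝ F] [TopologicalSpace F]

theorem isPolyhedralConvex_empty : IsPolyhedralConvex (∅ : Set E) :=
  ⟨1, fun _ => 0, fun _ => -1, by ext; simp⟩

theorem isPolyhedralConvex_setOf_forall_le {ι : Type*} [Finite ι] (f : ι → E →L[ℝ] ℝ)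
    (α : ι → ℝ) : IsPolyhedralConvex {x | ∀ i, f i x ≤ α i} := by
  cases nonempty_fintype ι
  let e := Fintype.equivFin ι
  exact ⟨Fintype.card ι, f ∘ e.symm, α ∘ e.symm, by ext; simp [e.symm.forall_congr_left]⟩

theorem isPolyhedralConvex_preimage_Iic {ι : Type*} [Finite ι] (Ψ : E →L[ℝ] (ι → ℝ))
    (α : ι → ℝ) : IsPolyhedralConvex (Ψ ⁻¹' Set.Iic α) :=
  isPolyhedralConvex_setOf_forall_le (fun i => (ContinuousLinearMap.proj i).comp Ψ) α

theorem IsPolyhedralConvex.inter {s t : Set E} (hs : IsPolyhedralConvex s)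
    (ht : IsPolyhedralConvex t) : IsPolyhedralConvex (s ∩ t) := by
  obtain ⟨n, f, α, rfl⟩ := hs
  obtain ⟨m, g, β, rfl⟩ := ht
  convert isPolyhedralConvex_setOf_forall_le (Sum.elim f g) (Sum.elim α β) using 1
  ext
  simp [Sum.forall]

theorem isPolyhedralConvex_preimage_singleton {ι : Type*} [Finite ι] (Ψ : E →L[ℝ] (ι → ℝ))
    (c : ι → ℝ) : IsPolyhedralConvex (Ψ ⁻¹' {c}) := by
  have h : Ψ ⁻¹' {c} = Ψ ⁻¹' Set.Iic c ∩ (-Ψ) ⁻¹' Set.Iic (-c) := by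
    ext x
    simp [le_antisymm_iff]
  rw [h]
  exact (isPolyhedralConvex_preimage_Iic Ψ c).inter (isPolyhedralConvex_preimage_Iic (-Ψ) (-c))

theorem IsPolyhedralConvex.preimage {s : Set F} (hs : IsPolyhedralConvex s) (φ : E →L[ℝ] F) :
    IsPolyhedralConvex (φ ⁻¹' s) := by
  obtain ⟨n, f, α, rfl⟩ := hs
  exact ⟨n, fun i => (f i).comp φ, α, rfl⟩

theorem isPolyhedralConvex_setOf_exists_forall_add_mul_le {ι : Type*} [Finite ι]
    (f : ι → E →L[ℝ] ℝ) (c α : ι → ℝ) :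
    IsPolyhedralConvex {x | ∃ t : ℝ, ∀ i, f i x + c i * t ≤ α i} := by
  have h : {x | ∃ t : ℝ, ∀ i, f i x + c i * t ≤ α i} =
      {x | ∀ i : {i // c i = 0}, f i x ≤ α i} ∩
        {x | ∀ p : {p : ι × ι // 0 < c p.1 ∧ c p.2 < 0},
          (c p.1.1 • f p.1.2 - c p.1.2 • f p.1.1) x ≤ c p.1.1 * α p.1.2 - c p.1.2 * α p.1.1} := by
    ext x
    simp only [Set.mem_ofPred_eq, Set.mem_inter_iff, ← le_sub_iff_add_le', exists_forall_mul_le_iff,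
      Subtype.forall, Prod.forall]
    refine and_congr (by simp only [sub_nonneg]) (forall₂_congr fun i j => ?_)
    simp only [and_imp, sub_apply, smul_apply, smul_eq_mul]
    refine imp_congr_right fun _ => imp_congr_right fun _ => ⟨fun h => ?_, fun h => ?_⟩ <;> linarith
  rw [h]
  exact (isPolyhedralConvex_setOf_forall_le _ _).inter (isPolyhedralConvex_setOf_forall_le _ _)

theorem IsPolyhedralConvex.image_fst_prod_real {G : Set (E × ℝ)} (hG : IsPolyhedralConvex G) :
    IsPolyhedralConvex (Prod.fst '' G) := by
  obtain ⟨n, F, α, rfl⟩ := hG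
  have hF : ∀ i x t, F i (x, t) = (F i).comp (.inl ℝ E ℝ) x + (F i).comp (.inr ℝ E ℝ) 1 * t :=
    fun i x t => by
      rw [← (F i).comp_inl_add_comp_inr, mul_comm, ← smul_eq_mul, ← map_smul, smul_eq_mul, mul_one]
  convert isPolyhedralConvex_setOf_exists_forall_add_mul_le
    (fun i => (F i).comp (.inl ℝ E ℝ)) (fun i => (F i).comp (.inr ℝ E ℝ) 1) α using 1
  ext x
  simp only [Set.mem_image, Prod.exists, exists_and_right, exists_eq_right, Set.mem_ofPred_eq, hF]

end

theorem IsPolyhedralConvex.image_fst_prod_pi : ∀ {k : ℕ} {E : Type*} [AddCommGroup E] [Module ℝ E]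
    [TopologicalSpace E] {G : Set (E × (Fin k → ℝ))}, IsPolyhedralConvex G →
    IsPolyhedralConvex (Prod.fst '' G)
  | 0, E, _, _, _, G, hG => by
    convert hG.preimage (.inl ℝ E (Fin 0 → ℝ)) using 1
    ext x
    refine ⟨fun ⟨⟨y, u⟩, hu, hy⟩ => ?_, fun h => ⟨_, h, rfl⟩⟩
    subst hy
    rwa [Subsingleton.elim u 0] at hu
  | k + 1, E, _, _, _, G, hG => by
    let e : ((E × ℝ) × (Fin k → ℝ)) ≃L[ℝ] E × (Fin (k + 1) → ℝ) :=
      (ContinuousLinearEquiv.prodAssoc ℝ E ℝ (Fin k → ℝ)).trans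
        ((ContinuousLinearEquiv.refl ℝ E).prodCongr (Fin.consEquivL ℝ fun _ => ℝ))
    have h : Prod.fst '' G = Prod.fst '' (Prod.fst '' (e ⁻¹' G)) := by
      rw [← e.image_symm_eq_preimage, Set.image_image, Set.image_image]
      rfl
    rw [h]
    have hG' : IsPolyhedralConvex (e ⁻¹' G) := hG.preimage e.toContinuousLinearMap
    exact hG'.image_fst_prod_pi.image_fst_prod_real

theorem AffineSubspace.isPolyhedralConvex {V : Type*} [AddCommGroup V] [Module ℝ V]
    [TopologicalSpace V] [IsTopologicalAddGroup V] [ContinuousSMul ℝ V] [T2Space V]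
    [FiniteDimensional ℝ V] (L : AffineSubspace ℝ V) : IsPolyhedralConvex (L : Set V) := by
  rcases (L : Set V).eq_empty_or_nonempty with hL | ⟨p, hp⟩
  · rw [hL]
    exact isPolyhedralConvex_empty
  let q : V →ₗ[ℝ] _ :=
    (Module.finBasis ℝ (V ⧸ L.direction)).equivFun.toLinearMap ∘ₗ L.direction.mkQ
  convert isPolyhedralConvex_preimage_singleton (LinearMap.toContinuousLinearMap q) (q p) using 1
  ext z
  simp [q, Submodule.Quotient.eq, ← vsub_right_mem_direction_iff_mem hp]

theorem IsPolyhedralConvex.image_fst_inter_snd_preimage {X Y : Type*}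
    [AddCommGroup X] [Module ℝ X] [TopologicalSpace X]
    [AddCommGroup Y] [Module ℝ Y] [TopologicalSpace Y] {P : Set (X × Y)}
    (hP : IsPolyhedralConvex P) (L : AffineSubspace ℝ Y) :
    IsPolyhedralConvex (Prod.fst '' (P ∩ Prod.snd ⁻¹' L)) := by
  obtain ⟨n, f, α, rfl⟩ := hP
  let Ψ := ContinuousLinearMap.pi f
  let A := Ψ.comp (.inl ℝ X Y)
  let B := Ψ.comp (.inr ℝ X Y)
  have h : Prod.fst '' ({p | ∀ i, f i p ≤ α i} ∩ Prod.snd ⁻¹' L) =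
      Prod.fst '' ((A.coprod (.id ℝ _)) ⁻¹' Set.Iic α ∩
        Prod.snd ⁻¹' (L.map (B : Y →ₗ[ℝ] (Fin n → ℝ)).toAffineMap : Set (Fin n → ℝ))) := by
    ext x
    simp [A, B, Ψ, Pi.le_def, ← map_add]
  rw [h]
  exact (isPolyhedralConvex_preimage_Iic _ α).inter
    ((L.map _).isPolyhedralConvex.preimage (.snd ℝ X _)) |>.image_fst_prod_pi

theorem preimage_of_gpc_under_polyhedral_multifunction_general
    {X Y : Type*}
    [AddCommGroup X] [Module ℝ X] [TopologicalSpace X]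
    [AddCommGroup Y] [Module ℝ Y] [TopologicalSpace Y]
    (G : Set (X × Y)) (hG : IsPolyhedralConvex G)
    (D : Set Y) (hD : IsGPC D) :
    IsPolyhedralConvex {x : X | ∃ y ∈ D, (x, y) ∈ G} := by
  obtain ⟨m, g, β, L, -, rfl⟩ := hD
  have hP : IsPolyhedralConvex (G ∩ Prod.snd ⁻¹' {y | ∀ j, g j y ≤ β j}) :=
    hG.inter (isPolyhedralConvex_setOf_forall_le g β |>.preimage (.snd ℝ X Y))
  convert hP.image_fst_inter_snd_preimage L using 1
  ext x
  simp only [Set.mem_ofPred_eq, Set.mem_image, Set.mem_inter_iff, Set.mem_preimage,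
    SetLike.mem_coe, Prod.exists, exists_and_right, exists_eq_right]
  exact exists_congr fun y => by tauto

/-- The inverse image of a generalized polyhedral convex set
under a polyhedral convex multifunction is polyhedral convex. -/
theorem preimage_of_gpc_under_polyhedral_multifunction
    {X Y : Type*}
    [AddCommGroup X] [Module ℝ X] [TopologicalSpace X] [IsTopologicalAddGroup X]
    [ContinuousSMul ℝ X] [LocallyConvexSpace ℝ X] [T2Space X]
    [AddCommGroup Y] [Module ℝ Y] [TopologicalSpace Y] [IsTopologicalAddGroup Y]
    [ContinuousSMul ℝ Y] [LocallyConvexSpace ℝ Y] [T2Space Y]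
    (G : Set (X × Y)) (hG : IsPolyhedralConvex G)
    (D : Set Y) (hD : IsGPC D) :
    IsPolyhedralConvex {x : X | ∃ y ∈ D, (x, y) ∈ G} :=
  preimage_of_gpc_under_polyhedral_multifunction_general G hG D hD
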